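/- arXiv:2601.19998 — 6 statements merged into one kernel-verified Lean document; each statement's English description precedes it below -/
import Mathlib

section
/- The determinant of the n×n matrix with entries 1/(1 − a_j x_i) equals V(a₁,...,aₙ)·V(x₁,...,xₙ) / ∏_{1≤i,j≤n}(1 − a_j x_i), where V denotes the Vandermonde determinant ∏_{i<j}(z_j − z_i). -/
set_option maxHeartbeats 1000000

open Matrix Finset

private theorem cauchy_aux {F : Type*} [Field F] :
    ∀ (n : ℕ) (a x : Fin n → F), (∀ i j, a j * x i ≠ 1) →
    Matrix.det (Matrix.of fun i j : Fin n => 1 / (1 - a j * x i)) =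
      ((∏ i : Fin n, ∏ j ∈ Finset.Ioi i, (a j - a i)) *
        ∏ i : Fin n, ∏ j ∈ Finset.Ioi i, (x j - x i)) /
        ∏ i : Fin n, ∏ j : Fin n, (1 - a j * x i) := by
  intro n
  induction n with
  | zero =>
    intro a x h
    simp [Matrix.det_fin_zero]
  | succ n ih =>
    intro a x h
    have h1 : ∀ i j, (1 : F) - a j * x i ≠ 0 := fun i j => sub_ne_zero.mpr (Ne.symm (h i j))
    -- matrices
    set C : Matrix (Fin (n+1)) (Fin (n+1)) F :=
      Matrix.of fun i j => (Fin.cons (1 : F) (fun i' => a j / (1 - a j * x i'.succ)) : Fin (n+1) → F) i with hC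
    set D : Matrix (Fin (n+1)) (Fin (n+1)) F :=
      Matrix.of fun i j =>
        (Fin.cons (C i 0)
          (fun j' => (Fin.cons (0 : F)
            (fun i' => (a j'.succ - a 0) / ((1 - a j'.succ * x i'.succ) * (1 - a 0 * x i'.succ))) : Fin (n+1) → F) i) : Fin (n+1) → F) j with hD
    -- Step 1: row operations
    have step1 : Matrix.det (Matrix.of fun i j : Fin (n+1) => 1 / (1 - a j * x i)) =
        Matrix.det (Matrix.of fun i j : Fin (n+1) =>
          (Fin.cons (1 / (1 - a j * x 0))
            (fun i' => (a j * (x i'.succ - x 0)) / ((1 - a j * x i'.succ) * (1 - a j * x 0))) : Fin (n+1) → F) i) := by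
      apply Matrix.det_eq_of_forall_row_eq_smul_add_const
        (Fin.cons 0 1 : Fin (n+1) → F) 0 (Fin.cons_zero _ _)
      intro i j
      refine Fin.cases ?_ (fun i' => ?_) i
      · simp
      · have e1 := h1 i'.succ j
        have e2 := h1 0 j
        simp only [Matrix.of_apply, Fin.cons_succ, Fin.cons_zero, Pi.one_apply, one_mul]
        field_simp
        ring
    -- Step 2: factor rows and columns
    have step2 : Matrix.det (Matrix.of fun i j : Fin (n+1) =>
          (Fin.cons (1 / (1 - a j * x 0))
            (fun i' => (a j * (x i'.succ - x 0)) / ((1 - a j * x i'.succ) * (1 - a j * x 0))) : Fin (n+1) → F) i) =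
        (∏ i : Fin n, (x i.succ - x 0)) * ((∏ j : Fin (n+1), (1 / (1 - a j * x 0))) * Matrix.det C) := by
      have hEq : (Matrix.of fun i j : Fin (n+1) =>
          (Fin.cons (1 / (1 - a j * x 0))
            (fun i' => (a j * (x i'.succ - x 0)) / ((1 - a j * x i'.succ) * (1 - a j * x 0))) : Fin (n+1) → F) i) =
          Matrix.of fun i j =>
            (Fin.cons (1 : F) (fun i' => x i'.succ - x 0) : Fin (n+1) → F) i *
              ((Matrix.of fun i j => (1 / (1 - a j * x 0)) * C i j) i j) := by
        ext i j
        refine Fin.cases ?_ (fun i' => ?_) i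
        · simp [hC]
        · have e1 := h1 i'.succ j
          have e2 := h1 0 j
          simp only [Matrix.of_apply, Fin.cons_succ, hC]
          field_simp
      rw [hEq, Matrix.det_mul_column, Matrix.det_mul_row]
      rw [Fin.prod_univ_succ, Fin.cons_zero, one_mul]
      simp only [Fin.cons_succ]
    -- Step 3: column operations
    have step3 : Matrix.det C = Matrix.det D := by
      rw [← Matrix.det_transpose C, ← Matrix.det_transpose D]
      apply Matrix.det_eq_of_forall_row_eq_smul_add_const
        (Fin.cons 0 1 : Fin (n+1) → F) 0 (Fin.cons_zero _ _)
      intro j i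
      refine Fin.cases ?_ (fun j' => ?_) j
      · simp [hD]
      · refine Fin.cases ?_ (fun i' => ?_) i
        · simp [hD, hC]
        · simp only [Matrix.transpose_apply, Fin.cons_succ, Fin.cons_zero, hD, hC,
            Matrix.of_apply, Pi.one_apply, one_mul]
          have e1 := h1 i'.succ j'.succ
          have e2 := h1 i'.succ 0
          field_simp
          rw [eq_div_iff (by rw [mul_comm]; exact e2)]
          ring
    -- Step 4: expand along row 0
    have step4 : Matrix.det D =
        Matrix.det (Matrix.of fun i j : Fin n =>
          (a j.succ - a 0) / ((1 - a j.succ * x i.succ) * (1 - a 0 * x i.succ))) := by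
      rw [Matrix.det_succ_row_zero, Fin.sum_univ_succ]
      have hD0 : ∀ j : Fin n, D 0 j.succ = 0 := by
        intro j; simp [hD]
      have hD00 : D 0 0 = 1 := by simp [hD, hC]
      simp only [hD0, hD00, mul_zero, zero_mul, mul_one, Finset.sum_const_zero, add_zero,
        Fin.val_zero, pow_zero, one_mul]
      rw [Fin.succAbove_zero]
      congr 1
    -- Step 5: factor and apply ih
    have step5 : Matrix.det (Matrix.of fun i j : Fin n =>
          (a j.succ - a 0) / ((1 - a j.succ * x i.succ) * (1 - a 0 * x i.succ))) =
        (∏ j : Fin n, (a j.succ - a 0)) * ((∏ i : Fin n, (1 / (1 - a 0 * x i.succ))) *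
          Matrix.det (Matrix.of fun i j : Fin n => 1 / (1 - a j.succ * x i.succ))) := by
      have hEq : (Matrix.of fun i j : Fin n =>
          (a j.succ - a 0) / ((1 - a j.succ * x i.succ) * (1 - a 0 * x i.succ))) =
          Matrix.of fun i j => (a j.succ - a 0) *
            ((Matrix.of fun i j : Fin n => (1 / (1 - a 0 * x i.succ)) *
              ((Matrix.of fun i j : Fin n => 1 / (1 - a j.succ * x i.succ)) i j)) i j) := by
        ext i j
        have e1 := h1 i.succ j.succ
        have e2 := h1 i.succ 0
        simp only [Matrix.of_apply]
        rw [one_div_mul_one_div, mul_one_div, mul_comm (1 - a 0 * x i.succ)]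
      rw [hEq, Matrix.det_mul_row, Matrix.det_mul_column]
    have ih' := ih (fun j => a j.succ) (fun i => x i.succ) (fun i j => h i.succ j.succ)
    rw [step1, step2, step3, step4, step5, ih']
    clear_value C D
    clear step1 step2 step3 step4 step5 hD hC D C ih ih'
    -- now pure algebra
    have hVa : (∏ i : Fin (n+1), ∏ j ∈ Finset.Ioi i, (a j - a i)) =
        (∏ j : Fin n, (a j.succ - a 0)) * ∏ i : Fin n, ∏ j ∈ Finset.Ioi i, (a j.succ - a i.succ) := by
      rw [Fin.prod_univ_succ, Fin.prod_Ioi_zero]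
      congr 1
      exact Finset.prod_congr rfl fun i _ => Fin.prod_Ioi_succ _ i
    have hVx : (∏ i : Fin (n+1), ∏ j ∈ Finset.Ioi i, (x j - x i)) =
        (∏ j : Fin n, (x j.succ - x 0)) * ∏ i : Fin n, ∏ j ∈ Finset.Ioi i, (x j.succ - x i.succ) := by
      rw [Fin.prod_univ_succ, Fin.prod_Ioi_zero]
      congr 1
      exact Finset.prod_congr rfl fun i _ => Fin.prod_Ioi_succ _ i
    have hDen : (∏ i : Fin (n+1), ∏ j : Fin (n+1), (1 - a j * x i)) =
        (∏ j : Fin (n+1), (1 - a j * x 0)) *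
          ∏ i : Fin n, ((1 - a 0 * x i.succ) * ∏ j : Fin n, (1 - a j.succ * x i.succ)) := by
      rw [Fin.prod_univ_succ]
      congr 1
      exact Finset.prod_congr rfl fun i _ => Fin.prod_univ_succ _
    rw [hVa, hVx, hDen]
    have hne1 : (∏ j : Fin (n+1), ((1:F) - a j * x 0)) ≠ 0 :=
      Finset.prod_ne_zero_iff.mpr fun j _ => h1 0 j
    have hne2 : (∏ i : Fin n, ((1:F) - a 0 * x i.succ)) ≠ 0 :=
      Finset.prod_ne_zero_iff.mpr fun i _ => h1 i.succ 0
    have hne3 : (∏ i : Fin n, ∏ j : Fin n, ((1:F) - a j.succ * x i.succ)) ≠ 0 :=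
      Finset.prod_ne_zero_iff.mpr fun i _ => Finset.prod_ne_zero_iff.mpr fun j _ => h1 i.succ j.succ
    rw [Finset.prod_mul_distrib]
    simp only [one_div]
    rw [Finset.prod_inv_distrib, Finset.prod_inv_distrib]
    field_simp

/-- `det (1/(1 - aⱼxᵢ)) = V(a)·V(x) / ∏_{i,j} (1 - aⱼxᵢ)`, where
`V(z) = ∏_{i<j} (zⱼ - zᵢ)` is the Vandermonde determinant. -/
theorem cauchy_type_determinant {F : Type*} [Field F] (n : ℕ) (a x : Fin n → F)
    (h : ∀ i j, a j * x i ≠ 1) :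
    Matrix.det (Matrix.of fun i j : Fin n => 1 / (1 - a j * x i)) =
      ((∏ i : Fin n, ∏ j ∈ Finset.Ioi i, (a j - a i)) *
        ∏ i : Fin n, ∏ j ∈ Finset.Ioi i, (x j - x i)) /
        ∏ i : Fin n, ∏ j : Fin n, (1 - a j * x i) := by
  exact cauchy_aux n a x h
end

section
/- The determinant of the n×n matrix with entries 1/(1 − a_j² x_i²) equals ∏_{1≤i<j≤n}(x_j−x_i)(x_j+x_i)(a_j−a_i)(a_j+a_i) divided by ∏_{1≤i,j≤n}(1 − a_j x_i)(1 + a_j x_i). -/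
open Matrix Finset


theorem cauchy_det_aux {F : Type*} [Field F] :
    ∀ (n : ℕ) (u v : Fin n → F), (∀ i j, u i * v j ≠ 1) →
    Matrix.det (Matrix.of fun i j : Fin n => 1 / (1 - u i * v j)) =
      (∏ i : Fin n, ∏ j ∈ Finset.Ioi i, (u j - u i) * (v j - v i)) /
        ∏ i : Fin n, ∏ j : Fin n, (1 - u i * v j) := by
  intro n
  induction n with
  | zero => intro u v h; simp
  | succ n ih =>
    intro u v h
    have hne : ∀ i j, (1 : F) - u i * v j ≠ 0 := fun i j => sub_ne_zero_of_ne (Ne.symm (h i j))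
    set M : Matrix (Fin (n+1)) (Fin (n+1)) F := Matrix.of fun i j => 1 / (1 - u i * v j) with hM
    set D : Matrix (Fin (n+1)) (Fin (n+1)) F := Matrix.diagonal fun i => 1 - u i * v 0 with hD
    set T : Matrix (Fin (n+1)) (Fin (n+1)) F :=
      Matrix.of fun j k => if j = k then (1:F) else if j = 0 then -1 else 0 with hT
    set S : Matrix (Fin (n+1)) (Fin (n+1)) F :=
      Matrix.of fun i k => if i = k then (1:F) else if k = 0 then -1 else 0 with hS
    set B : Matrix (Fin (n+1)) (Fin (n+1)) F :=
      Matrix.of fun i k => if k = 0 then (1:F) else u i * (v k - v 0) / (1 - u i * v k) with hB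
    set G : Matrix (Fin (n+1)) (Fin (n+1)) F :=
      Matrix.of fun i j => if j = 0 then (if i = 0 then (1:F) else 0)
        else if i = 0 then u 0 * (v j - v 0) / (1 - u 0 * v j)
        else (u i - u 0) * (v j - v 0) / ((1 - u i * v j) * (1 - u 0 * v j)) with hG
    have hDMT : D * M * T = B := by
      ext i k
      rw [Matrix.mul_apply]
      by_cases hk : k = 0
      · subst hk
        have e1 : ∀ j, (D * M) i j * T j 0 = if j = 0 then (D * M) i j else 0 := by
          intro j
          by_cases hj : j = 0 <;> simp [hT, hj]
        rw [Finset.sum_congr rfl fun j _ => e1 j,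
          Finset.sum_ite_eq' Finset.univ 0 (fun j => (D*M) i j)]
        simp [hD, hM, Matrix.diagonal_mul, hB]
        exact mul_inv_cancel₀ (hne i 0)
      · have e1 : ∀ j, (D * M) i j * T j k =
            (if j = k then (D * M) i j else 0) + (if j = 0 then -((D * M) i j) else 0) := by
          intro j
          by_cases hjk : j = k
          · subst hjk; simp [hT, hk]
          · by_cases hj0 : j = 0
            · subst hj0; simp [hT, Ne.symm hjk, Ne.symm hk]
            · simp [hT, hjk, hj0]
        rw [Finset.sum_congr rfl fun j _ => e1 j, Finset.sum_add_distrib,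
          Finset.sum_ite_eq' Finset.univ k (fun j => (D*M) i j),
          Finset.sum_ite_eq' Finset.univ 0 (fun j => -((D*M) i j))]
        simp only [Finset.mem_univ, if_true]
        simp only [hD, hM, Matrix.diagonal_mul, Matrix.of_apply, hB, if_neg hk]
        field_simp [hne i k, hne i 0]
        ring
    have hSB : S * B = G := by
      ext i j
      rw [Matrix.mul_apply]
      by_cases hi : i = 0
      · subst hi
        have e1 : ∀ k, S 0 k * B k j = if (0 : Fin (n+1)) = k then B k j else 0 := by
          intro k
          by_cases hk : (0 : Fin (n+1)) = k
          · subst hk; simp [hS]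
          · have hk' : ¬ k = 0 := fun e => hk e.symm
            simp [hS, hk, hk']
        rw [Finset.sum_congr rfl fun k _ => e1 k,
          Finset.sum_ite_eq Finset.univ 0 (fun k => B k j)]
        by_cases hj : j = 0 <;> simp [hB, hG, hj]
      · have e1 : ∀ k, S i k * B k j =
            (if i = k then B k j else 0) + (if k = 0 then -(B k j) else 0) := by
          intro k
          by_cases hki : i = k
          · subst hki; simp [hS, hi]
          · by_cases hk0 : k = 0
            · subst hk0; simp [hS, hki, hi]
            · simp [hS, hki, hk0]
        rw [Finset.sum_congr rfl fun k _ => e1 k, Finset.sum_add_distrib,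
          Finset.sum_ite_eq Finset.univ i (fun k => B k j),
          Finset.sum_ite_eq' Finset.univ 0 (fun k => -(B k j))]
        simp only [Finset.mem_univ, if_true]
        by_cases hj : j = 0
        · simp [hB, hG, hj, hi]
        · simp only [hB, hG, Matrix.of_apply, if_neg hj, if_neg hi]
          rw [← sub_eq_add_neg, div_sub_div _ _ (hne i j) (hne 0 j)]
          congr 1
          ring
    have hdetT : T.det = 1 := by
      rw [Matrix.det_of_upperTriangular]
      · simp [hT]
      · intro a b hab
        have h1 : a ≠ b := fun e => absurd hab (by simp [e])
        have h2 : a ≠ 0 := fun e => by subst e; exact absurd hab (Fin.not_lt_zero b)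
        simp [hT, h1, h2]
    have hdetS : S.det = 1 := by
      rw [Matrix.det_of_lowerTriangular]
      · simp [hS]
      · intro a b hab
        have hab' : a < b := hab
        have h1 : a ≠ b := ne_of_lt hab'
        have h2 : b ≠ 0 := fun e => by subst e; exact absurd hab' (Fin.not_lt_zero a)
        simp [hS, h1, h2]
    have hdetD : D.det = ∏ i : Fin (n+1), (1 - u i * v 0) := by
      simp [hD, Matrix.det_diagonal]
    have hDne : D.det ≠ 0 := by
      rw [hdetD]; exact Finset.prod_ne_zero_iff.mpr fun i _ => hne i 0
    have hdetG1 : G.det = Matrix.det (G.submatrix Fin.succ Fin.succ) := by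
      rw [Matrix.det_succ_column_zero, Fin.sum_univ_succ]
      simp [hG, Fin.succ_ne_zero, Fin.succAbove_zero]
    have hIH := ih (fun i => u i.succ) (fun j => v j.succ) (fun i j => h i.succ j.succ)
    have hsub : G.submatrix Fin.succ Fin.succ =
        Matrix.diagonal (fun i : Fin n => u i.succ - u 0) *
          (Matrix.of fun i j : Fin n => 1 / (1 - u i.succ * v j.succ)) *
          Matrix.diagonal (fun j : Fin n => (v j.succ - v 0) / (1 - u 0 * v j.succ)) := by
      ext i j
      simp only [Matrix.submatrix_apply, hG, Matrix.of_apply, if_neg (Fin.succ_ne_zero j),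
        if_neg (Fin.succ_ne_zero i), Matrix.mul_diagonal, Matrix.diagonal_mul]
      field_simp [hne i.succ j.succ, hne 0 j.succ]
    have hdetG : G.det = (∏ i : Fin n, (u i.succ - u 0)) *
        ((∏ i : Fin n, ∏ j ∈ Finset.Ioi i, (u j.succ - u i.succ) * (v j.succ - v i.succ)) /
          ∏ i : Fin n, ∏ j : Fin n, (1 - u i.succ * v j.succ)) *
        ((∏ j : Fin n, (v j.succ - v 0)) / ∏ j : Fin n, (1 - u 0 * v j.succ)) := by
      rw [hdetG1, hsub, Matrix.det_mul, Matrix.det_mul, Matrix.det_diagonal,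
        Matrix.det_diagonal, hIH, Finset.prod_div_distrib]
    have hMdet : D.det * M.det = G.det := by
      rw [← hSB, ← hDMT, Matrix.det_mul, Matrix.det_mul, Matrix.det_mul, hdetS, hdetT]
      ring
    have hMdet' : M.det = G.det / D.det := by
      rw [eq_div_iff hDne, ← hMdet]; ring
    have hP : (∏ i : Fin (n+1), ∏ j ∈ Finset.Ioi i, (u j - u i) * (v j - v i)) =
        ((∏ i : Fin n, (u i.succ - u 0)) * (∏ j : Fin n, (v j.succ - v 0))) *
          ∏ i : Fin n, ∏ j ∈ Finset.Ioi i, (u j.succ - u i.succ) * (v j.succ - v i.succ) := by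
      rw [Fin.prod_univ_succ, Fin.prod_Ioi_zero, Finset.prod_mul_distrib]
      simp_rw [Fin.prod_Ioi_succ]
    have hQ : (∏ i : Fin (n+1), ∏ j : Fin (n+1), (1 - u i * v j)) =
        ((1 - u 0 * v 0) * ∏ j : Fin n, (1 - u 0 * v j.succ)) *
          ((∏ i : Fin n, (1 - u i.succ * v 0)) *
            ∏ i : Fin n, ∏ j : Fin n, (1 - u i.succ * v j.succ)) := by
      rw [Fin.prod_univ_succ, Fin.prod_univ_succ]
      simp_rw [Fin.prod_univ_succ, Finset.prod_mul_distrib]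
    have hD0 : (∏ i : Fin (n+1), ((1:F) - u i * v 0)) =
        (1 - u 0 * v 0) * ∏ i : Fin n, (1 - u i.succ * v 0) := Fin.prod_univ_succ _
    rw [hMdet', hdetG, hdetD, hP, hQ, hD0]
    have h1 : (1 : F) - u 0 * v 0 ≠ 0 := hne 0 0
    have h2 : (∏ j : Fin n, ((1:F) - u 0 * v j.succ)) ≠ 0 :=
      Finset.prod_ne_zero_iff.mpr fun j _ => hne 0 j.succ
    have h3 : (∏ i : Fin n, ((1:F) - u i.succ * v 0)) ≠ 0 :=
      Finset.prod_ne_zero_iff.mpr fun i _ => hne i.succ 0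
    have h4 : (∏ i : Fin n, ∏ j : Fin n, ((1:F) - u i.succ * v j.succ)) ≠ 0 :=
      Finset.prod_ne_zero_iff.mpr fun i _ => Finset.prod_ne_zero_iff.mpr fun j _ => hne i.succ j.succ
    have h5 : (∏ i : Fin (n+1), ((1:F) - u i * v 0)) ≠ 0 :=
      Finset.prod_ne_zero_iff.mpr fun i _ => hne i 0
    field_simp

/-- `det (1/(1 - aⱼ²xᵢ²)) = ∏_{i<j}(xⱼ-xᵢ)(xⱼ+xᵢ)(aⱼ-aᵢ)(aⱼ+aᵢ)
  / ∏_{i,j} (1 - aⱼxᵢ)(1 + aⱼxᵢ)`. -/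
theorem cauchy_type_determinant_squares {F : Type*} [Field F] (n : ℕ) (a x : Fin n → F)
    (h : ∀ i j, a j ^ 2 * x i ^ 2 ≠ 1) :
    Matrix.det (Matrix.of fun i j : Fin n => 1 / (1 - a j ^ 2 * x i ^ 2)) =
      (∏ i : Fin n, ∏ j ∈ Finset.Ioi i,
          (x j - x i) * (x j + x i) * (a j - a i) * (a j + a i)) /
        ∏ i : Fin n, ∏ j : Fin n, ((1 - a j * x i) * (1 + a j * x i)) := by
  have h' : ∀ i j, (x i ^ 2) * (a j ^ 2) ≠ 1 := fun i j => by
    rw [mul_comm]; exact h i j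
  have key := cauchy_det_aux n (fun i => x i ^ 2) (fun j => a j ^ 2) h'
  have e0 : (Matrix.of fun i j : Fin n => 1 / (1 - a j ^ 2 * x i ^ 2)) =
      (Matrix.of fun i j : Fin n => 1 / (1 - x i ^ 2 * a j ^ 2)) := by
    ext i j; simp only [Matrix.of_apply]; ring_nf
  rw [e0, key]
  congr 1
  · exact Finset.prod_congr rfl fun i _ => Finset.prod_congr rfl fun j _ => by ring
  · exact Finset.prod_congr rfl fun i _ => Finset.prod_congr rfl fun j _ => by ring
end

section
/- Let f_j(x) = 1/(1 − a_j² x²) for 0 < a₁ < ... < aₙ. Then for 0 < x₁ < ... < xₙ < 1/aₙ, the determinant of the collocation matrix (f_j(x_i))_{i,j=1}^n is strictly positive. -/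
open Matrix
open Finset in

theorem det_cauchy_aux {n : ℕ} (u v : Fin n → ℝ) (h : ∀ i j, u i + v j ≠ 0) :
    Matrix.det (Matrix.of fun i j : Fin n => 1 / (u i + v j)) =
      (∏ i : Fin n, ∏ j ∈ Finset.Ioi i, (u j - u i) * (v j - v i)) /
        ∏ i : Fin n, ∏ j : Fin n, (u i + v j) := by
  induction n with
  | zero => simp
  | succ n ih =>
    have h00 : u 0 + v 0 ≠ 0 := h 0 0
    calc
      Matrix.det (Matrix.of fun i j : Fin (n+1) => 1 / (u i + v j))
          = Matrix.det (Matrix.of fun i j : Fin (n+1) =>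
              Fin.cons (α := fun _ => Fin (n+1) → ℝ) (fun j : Fin (n+1) => 1 / (u 0 + v j))
                (fun i j => ((u i.succ - u 0) * (v j - v 0)) /
                  ((u i.succ + v j) * ((u i.succ + v 0) * (u 0 + v j)))) i j) := by
        refine det_eq_of_forall_row_eq_smul_add_const
          (Fin.cons 0 (fun i : Fin n => (u 0 + v 0) / (u i.succ + v 0))) 0
          (Fin.cons_zero _ _) ?_
        intro i j
        refine Fin.cases ?_ (fun i => ?_) i
        · simp
        · simp only [of_apply, Fin.cons_succ, Fin.cons_zero]
          have h1 := h i.succ j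
          have h2 := h i.succ 0
          have h3 := h 0 j
          field_simp
          ring
      _ = 1 / (u 0 + v 0) * Matrix.det (Matrix.of fun i j : Fin n =>
              ((u i.succ - u 0) * (v j.succ - v 0)) /
                ((u i.succ + v j.succ) * ((u i.succ + v 0) * (u 0 + v j.succ)))) := by
        rw [det_succ_column_zero]
        simp [Fin.sum_univ_succ, Fin.succAbove_zero, submatrix]
      _ = 1 / (u 0 + v 0) *
            ((∏ i : Fin n, (u i.succ - u 0) / (u i.succ + v 0)) *
              ((∏ j : Fin n, (v j.succ - v 0) / (u 0 + v j.succ)) *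
                Matrix.det (Matrix.of fun i j : Fin n =>
                  1 / (u i.succ + v j.succ)))) := by
        congr 1
        rw [show (Matrix.of fun i j : Fin n =>
              ((u i.succ - u 0) * (v j.succ - v 0)) /
                ((u i.succ + v j.succ) * ((u i.succ + v 0) * (u 0 + v j.succ))))
            = Matrix.of (fun i j : Fin n =>
              ((u i.succ - u 0) / (u i.succ + v 0)) *
                (Matrix.of (fun i j : Fin n => ((v j.succ - v 0) / (u 0 + v j.succ)) *
                  (Matrix.of (fun i j : Fin n => 1 / (u i.succ + v j.succ)) i j)) i j))
            from ?_, det_mul_column, det_mul_row]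
        ext i j
        simp only [of_apply]
        have h1 := h i.succ j.succ
        have h2 := h i.succ 0
        have h3 := h 0 j.succ
        rw [div_mul_div_comm, div_mul_div_comm, mul_one, div_eq_div_iff (by positivity) (by
          exact mul_ne_zero h2 (mul_ne_zero h3 h1))]
        ring
      _ = (∏ i : Fin (n+1), ∏ j ∈ Finset.Ioi i, (u j - u i) * (v j - v i)) /
            ∏ i : Fin (n+1), ∏ j : Fin (n+1), (u i + v j) := by
        have := ih (fun i => u i.succ) (fun j => v j.succ) (fun i j => h i.succ j.succ)
        rw [show (Matrix.of fun i j : Fin n => 1 / (u i.succ + v j.succ)) = (Matrix.of fun i j : Fin n => 1 / ((fun i => u i.succ) i + (fun j => v j.succ) j)) from rfl, this]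
        have hA : (∏ i : Fin n, (u i.succ + v 0)) ≠ 0 :=
          Finset.prod_ne_zero_iff.mpr fun i _ => h i.succ 0
        have hB : (∏ j : Fin n, (u 0 + v j.succ)) ≠ 0 :=
          Finset.prod_ne_zero_iff.mpr fun j _ => h 0 j.succ
        have hD : (∏ i : Fin n, ∏ j : Fin n, (u i.succ + v j.succ)) ≠ 0 :=
          Finset.prod_ne_zero_iff.mpr fun i _ =>
            Finset.prod_ne_zero_iff.mpr fun j _ => h i.succ j.succ
        simp only [Fin.prod_univ_succ, Fin.prod_Ioi_zero, Fin.prod_Ioi_succ,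
          Finset.prod_div_distrib, Finset.prod_mul_distrib]
        field_simp

/-- For `0 < a₁ < ⋯ < aₙ` and `0 < x₁ < ⋯ < xₙ < 1/aₙ`, the collocation
determinant `det (1/(1 - aⱼ²xᵢ²))` is strictly positive. -/
theorem collocation_det_pos_cauchy_squares (n : ℕ) (a x : Fin (n + 1) → ℝ)
    (ha0 : ∀ i, 0 < a i) (ha : StrictMono a)
    (hx0 : ∀ i, 0 < x i) (hx : StrictMono x)
    (hxa : ∀ i, x i < 1 / a (Fin.last n)) :
    0 < Matrix.det (Matrix.of fun i j : Fin (n + 1) => 1 / (1 - a j ^ 2 * x i ^ 2)) := by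
  set u : Fin (n + 1) → ℝ := fun i => 1 / x i ^ 2 with hu
  set v : Fin (n + 1) → ℝ := fun j => -(a j ^ 2) with hv
  have hx0' : ∀ i, x i ≠ 0 := fun i => (hx0 i).ne'
  have key : ∀ i j, a j * x i < 1 := by
    intro i j
    have h1 : a j * x i ≤ a (Fin.last n) * x i :=
      mul_le_mul_of_nonneg_right (ha.monotone (Fin.le_last j)) (hx0 i).le
    have h2 : a (Fin.last n) * x i < 1 := by
      have h3 := hxa i
      rw [lt_div_iff₀ (ha0 (Fin.last n))] at h3
      linarith
    linarith
  have hpos : ∀ i j, 0 < u i + v j := by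
    intro i j
    have h1 : 0 < 1 - a j ^ 2 * x i ^ 2 := by nlinarith [key i j, mul_pos (ha0 j) (hx0 i)]
    have h2 : (0:ℝ) < x i ^ 2 := pow_pos (hx0 i) 2
    have : u i + v j = (1 - a j ^ 2 * x i ^ 2) / x i ^ 2 := by
      simp only [hu, hv]
      have h3 := hx0' i
      field_simp
      ring
    rw [this]
    positivity
  have hM : (Matrix.of fun i j : Fin (n + 1) => 1 / (1 - a j ^ 2 * x i ^ 2)) =
      Matrix.of fun i j : Fin (n + 1) =>
        (1 / x i ^ 2) * (Matrix.of (fun i j : Fin (n + 1) => 1 / (u i + v j)) i j) := by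
    ext i j
    simp only [Matrix.of_apply, hu, hv]
    rw [div_mul_div_comm, one_mul]
    congr 1
    have h2 : x i ^ 2 ≠ 0 := pow_ne_zero 2 (hx0' i)
    have h3 := hx0' i
    field_simp
    ring
  rw [hM, Matrix.det_mul_column, det_cauchy_aux u v (fun i j => (hpos i j).ne')]
  have hnum : 0 < ∏ i : Fin (n+1), ∏ j ∈ Finset.Ioi i, (u j - u i) * (v j - v i) := by
    refine Finset.prod_pos fun i _ => Finset.prod_pos fun j hj => ?_
    have hij : i < j := Finset.mem_Ioi.mp hj
    have h1 : u j - u i < 0 := by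
      have hxij : x i < x j := hx hij
      have : x i ^ 2 < x j ^ 2 := by nlinarith [hx0 i, hx0 j]
      have h2 : (0:ℝ) < x i ^ 2 := pow_pos (hx0 i) 2
      have h3 : (0:ℝ) < x j ^ 2 := pow_pos (hx0 j) 2
      simp only [hu]
      rw [sub_neg, div_lt_div_iff₀ h3 h2]
      nlinarith
    have h2 : v j - v i < 0 := by
      have haij : a i < a j := ha hij
      simp only [hv]
      nlinarith [ha0 i, ha0 j]
    exact mul_pos_of_neg_of_neg h1 h2
  have hden : 0 < ∏ i : Fin (n+1), ∏ j : Fin (n+1), (u i + v j) :=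
    Finset.prod_pos fun i _ => Finset.prod_pos fun j _ => hpos i j
  have hw : 0 < ∏ i : Fin (n+1), 1 / x i ^ 2 := Finset.prod_pos fun i _ => div_pos one_pos (pow_pos (hx0 i) 2)
  exact mul_pos hw (div_pos hnum hden)
end

section
/- For n pairwise distinct positive reals x₁ < ... < xₙ, the Vandermonde matrix (x_j^{i−1})_{i,j=1}^n is totally positive: every minor is nonnegative (indeed strictly positive). -/
open Matrix Set

/-- A nonzero linear combination of `k` distinct real power functions has
fewer than `k` positive roots. -/
private lemma gv_key : ∀ (k : ℕ) (a c : Fin k → ℝ), StrictMono a → (∃ i, c i ≠ 0) →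
    ∀ (N : ℕ) (t : Fin N → ℝ), StrictMono t → (∀ j, 0 < t j) →
      (∀ j, ∑ i, c i * t j ^ a i = 0) → N < k := by
  intro k
  induction k with
  | zero => rintro a c _ ⟨i, _⟩; exact i.elim0
  | succ m ih =>
    rintro a c ha ⟨i0, hc0⟩ N t ht ht0 hroot
    by_cases htail : ∀ i : Fin m, c i.succ = 0
    · have hc00 : c 0 ≠ 0 := by
        rcases Fin.eq_zero_or_eq_succ i0 with h | ⟨j, rfl⟩
        · rwa [h] at hc0
        · exact absurd (htail j) hc0
      rcases Nat.eq_zero_or_pos N with h | h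
      · omega
      · exfalso
        have h0 := hroot ⟨0, h⟩
        rw [Fin.sum_univ_succ] at h0
        rw [Finset.sum_eq_zero (fun i _ => by rw [htail i, zero_mul]), add_zero] at h0
        rcases mul_eq_zero.mp h0 with h' | h'
        · exact hc00 h'
        · exact absurd h' (Real.rpow_pos_of_pos (ht0 _) _).ne'
    · push_neg at htail
      obtain ⟨i1, hi1⟩ := htail
      set g : ℝ → ℝ := fun s => ∑ i, c i * s ^ (a i - a 0) with hg
      set G : ℝ → ℝ := fun s => ∑ i, (c i * (a i - a 0)) * s ^ (a i - a 0 - 1) with hG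
      have hgroot : ∀ j, g (t j) = 0 := by
        intro j
        have h1 : t j ^ a 0 * g (t j) = ∑ i, c i * t j ^ a i := by
          rw [hg, Finset.mul_sum]
          refine Finset.sum_congr rfl fun i _ => ?_
          rw [mul_left_comm, ← Real.rpow_add (ht0 j)]
          congr 2
          ring
        rw [hroot j] at h1
        rcases mul_eq_zero.mp h1 with h' | h'
        · exact absurd h' (Real.rpow_pos_of_pos (ht0 _) _).ne'
        · exact h'
      have hderiv : ∀ s : ℝ, 0 < s → HasDerivAt g (G s) s := by
        intro s hs
        rw [hg, hG]
        apply HasDerivAt.fun_sum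
        intro i _
        have h1 : HasDerivAt (fun x : ℝ => x ^ (a i - a 0))
            ((a i - a 0) * s ^ (a i - a 0 - 1)) s :=
          Real.hasDerivAt_rpow_const (Or.inl hs.ne')
        simpa [mul_assoc] using h1.const_mul (c i)
      rcases N with _ | M
      · omega
      · -- Rolle between consecutive roots
        have H : ∀ j : Fin M, ∃ s, s ∈ Ioo (t j.castSucc) (t j.succ) ∧ G s = 0 := by
          intro j
          have hlt : t j.castSucc < t j.succ := ht Fin.castSucc_lt_succ
          have hpos : ∀ x ∈ Icc (t j.castSucc) (t j.succ), (0:ℝ) < x :=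
            fun x hx => lt_of_lt_of_le (ht0 j.castSucc) hx.1
          have hcont : ContinuousOn g (Icc (t j.castSucc) (t j.succ)) := fun x hx =>
            ((hderiv x (hpos x hx)).continuousAt).continuousWithinAt
          have heq : g (t j.castSucc) = g (t j.succ) := by
            rw [hgroot, hgroot]
          exact exists_hasDerivAt_eq_zero hlt hcont heq
            (fun x hx => hderiv x (hpos x (Ioo_subset_Icc_self hx)))
        choose s hs1 hs2 using H
        have hsmono : StrictMono s := by
          intro j j' hjj
          calc s j < t j.succ := (hs1 j).2
            _ ≤ t j'.castSucc := ht.monotone (by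
                rw [Fin.le_def]
                simp only [Fin.val_succ, Fin.coe_castSucc]
                exact hjj)
            _ < s j' := (hs1 j').1
        have hspos : ∀ j, 0 < s j := fun j => lt_trans (ht0 j.castSucc) (hs1 j).1
        have hG0 : ∀ j, ∑ i : Fin m, (c i.succ * (a i.succ - a 0)) * s j ^ (a i.succ - a 0 - 1)
            = 0 := by
          intro j
          have h0 : ∑ i : Fin (m + 1), c i * (a i - a 0) * s j ^ (a i - a 0 - 1) = 0 := hs2 j
          rw [Fin.sum_univ_succ, sub_self, mul_zero, zero_mul, zero_add] at h0
          exact h0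
        have hemono : StrictMono fun i : Fin m => a i.succ - a 0 - 1 := by
          intro i i' hii
          have := ha (Fin.succ_lt_succ_iff.mpr hii)
          show a i.succ - a 0 - 1 < a i'.succ - a 0 - 1
          linarith
        have hcne : c i1.succ * (a i1.succ - a 0) ≠ 0 := by
          have : a 0 < a i1.succ := ha (Fin.succ_pos i1)
          exact mul_ne_zero hi1 (by linarith)
        have := ih (fun i => a i.succ - a 0 - 1) (fun i => c i.succ * (a i.succ - a 0))
          hemono ⟨i1, hcne⟩ M s hsmono hspos hG0
        omega

/-- Generalized Vandermonde determinants (with real exponents) are nonzero. -/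
private lemma gv_det_ne_zero (k : ℕ) (a y : Fin k → ℝ) (ha : StrictMono a)
    (hy : StrictMono y) (hy0 : ∀ j, 0 < y j) :
    (Matrix.of fun i j : Fin k => y j ^ a i).det ≠ 0 := by
  intro h
  obtain ⟨v, hv, hmul⟩ := Matrix.exists_vecMul_eq_zero_iff.mpr h
  have hroot : ∀ j, ∑ i, v i * y j ^ a i = 0 := by
    intro j
    have := congrFun hmul j
    simpa [Matrix.vecMul, dotProduct] using this
  obtain ⟨i, hi⟩ := Function.ne_iff.mp hv
  exact lt_irrefl k (gv_key k a v ha ⟨i, by simpa using hi⟩ k y hy hy0 hroot)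

/-- Generalized Vandermonde determinants (with real exponents) are positive. -/
private lemma gv_det_pos (k : ℕ) (a y : Fin k → ℝ) (ha : StrictMono a)
    (hy : StrictMono y) (hy0 : ∀ j, 0 < y j) :
    0 < (Matrix.of fun i j : Fin k => y j ^ a i).det := by
  set F : ℝ → ℝ :=
    fun u => (Matrix.of fun i j : Fin k => y j ^ ((1 - u) * ((i : ℕ) : ℝ) + u * a i)).det
    with hF
  have hmono : ∀ u ∈ Icc (0:ℝ) 1,
      StrictMono fun i : Fin k => (1 - u) * ((i : ℕ) : ℝ) + u * a i := by
    rintro u ⟨hu0, hu1⟩ i i' hii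
    have h1 : ((i : ℕ) : ℝ) < ((i' : ℕ) : ℝ) := by exact_mod_cast hii
    have h2 : a i < a i' := ha hii
    show (1 - u) * ((i : ℕ) : ℝ) + u * a i < (1 - u) * ((i' : ℕ) : ℝ) + u * a i'
    rcases eq_or_lt_of_le hu0 with h | h
    · rw [← h]; simpa using h1
    · have e1 : (1 - u) * ((i : ℕ) : ℝ) ≤ (1 - u) * ((i' : ℕ) : ℝ) :=
        mul_le_mul_of_nonneg_left h1.le (by linarith)
      have e2 : u * a i < u * a i' := by exact mul_lt_mul_of_pos_left h2 h
      linarith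
  have hne : ∀ u ∈ Icc (0:ℝ) 1, F u ≠ 0 :=
    fun u hu => gv_det_ne_zero k _ y (hmono u hu) hy hy0
  have hcont : Continuous F := by
    rw [hF]
    apply Continuous.matrix_det
    apply continuous_matrix
    intro i j
    simp only [Matrix.of_apply, Real.rpow_def_of_pos (hy0 j)]
    fun_prop
  have hF0 : 0 < F 0 := by
    have hmeq : (Matrix.of fun i j : Fin k => y j ^ ((1 - (0:ℝ)) * ((i : ℕ) : ℝ) + 0 * a i))
        = (Matrix.vandermonde y)ᵀ := by
      ext i j
      simp [Matrix.vandermonde, Real.rpow_natCast]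
    have h0eq : F 0 = ((Matrix.vandermonde y)ᵀ).det := by
      show (Matrix.of fun i j : Fin k =>
        y j ^ ((1 - (0:ℝ)) * ((i : ℕ) : ℝ) + 0 * a i)).det = _
      rw [hmeq]
    rw [h0eq, Matrix.det_transpose, Matrix.det_vandermonde]
    refine Finset.prod_pos fun i _ => Finset.prod_pos fun j hj => ?_
    exact sub_pos.mpr (hy (Finset.mem_Ioi.mp hj))
  have hF1 : F 1 = (Matrix.of fun i j : Fin k => y j ^ a i).det := by
    have hmeq : (Matrix.of fun i j : Fin k => y j ^ ((1 - (1:ℝ)) * ((i : ℕ) : ℝ) + 1 * a i))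
        = Matrix.of fun i j : Fin k => y j ^ a i := by
      ext i j
      simp only [Matrix.of_apply]
      congr 1
      ring
    show (Matrix.of fun i j : Fin k =>
      y j ^ ((1 - (1:ℝ)) * ((i : ℕ) : ℝ) + 1 * a i)).det = _
    rw [hmeq]
  rw [← hF1]
  by_contra hc
  push_neg at hc
  have hF1neg : F 1 < 0 := lt_of_le_of_ne hc (hne 1 ⟨zero_le_one, le_refl 1⟩)
  have hmem : (0:ℝ) ∈ Icc (F 1) (F 0) := ⟨le_of_lt hF1neg, le_of_lt hF0⟩
  obtain ⟨u, hu, hFu⟩ := intermediate_value_Icc' zero_le_one hcont.continuousOn hmem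
  exact hne u hu hFu

/-- For positive increasing nodes `x₁ < ⋯ < xₙ`, the Vandermonde matrix
`(x_j^{i-1})` is totally positive: every minor is strictly positive
(in particular nonnegative). -/
theorem vandermonde_totally_positive (n : ℕ) (x : Fin n → ℝ)
    (hx0 : ∀ i, 0 < x i) (hx : StrictMono x) :
    ∀ (k : ℕ) (r c : Fin k → Fin n), StrictMono r → StrictMono c →
      0 < Matrix.det ((Matrix.of fun i j : Fin n => x j ^ i.val).submatrix r c) := by
  intro k r c hr hc
  have hkey := gv_det_pos k (fun i => (((r i : ℕ) : ℝ))) (fun j => x (c j))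
    (fun i i' h => by show (((r i : ℕ) : ℝ)) < (((r i' : ℕ) : ℝ)); exact_mod_cast hr h)
    (fun j j' h => hx (hc h))
    (fun j => hx0 _)
  have hmeq : ((Matrix.of fun i j : Fin n => x j ^ i.val).submatrix r c)
      = Matrix.of fun i j : Fin k => x (c j) ^ (((r i : ℕ) : ℝ)) := by
    ext i j
    simp [Real.rpow_natCast]
  rw [hmeq]
  exact hkey
end

section
/- Let f be analytic at 0 with f^{(λ_j)}(0), ..., f^{(λ₁+j−1)}(0) as in F_λ, and let f_l(x) = f(a_l x). Then the j×j minor of the transposed infinite Wronskian W^t_f taken on rows i−j+1,...,i and columns λ_j+1, ..., λ₁+j satisfies W^t_f[i,λ] = F_λ · V(a_{i−j+1},...,a_i) · s_λ(a_{i−j+1},...,a_i), where F_λ = ∏_{l=1}^j f^{(λ_l+j−l)}(0). -/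
open Matrix Finset

/-- For `f` analytic at `0`, `f_l(x) = f(a_l x)` and a partition
`λ = (λ₁ ≥ ⋯ ≥ λ_j ≥ 0)`, the `j×j` minor of the transposed infinite Wronskian
`(W^t_f)_{l,k+1} = a_l^k f^{(k)}(0)` on consecutive rows `i-j+1,…,i` and
columns `λ_j+1,…,λ₁+j` satisfies
`W^t_f[i,λ] = F_λ · V(a_{i-j+1},…,a_i) · s_λ(a_{i-j+1},…,a_i)`, where
`F_λ = ∏_{l=1}^j f^{(λ_l+j-l)}(0)`, `V` is the Vandermonde determinant and
`s_λ` the Schur polynomial (bialternant formula). -/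
theorem wronskian_minor_eq_F_mul_vandermonde_mul_schur
    (n j i : ℕ) (hi : i < n) (hji : j ≤ i + 1)
    (f : ℝ → ℝ) (hf : AnalyticAt ℝ f 0)
    (a : Fin n → ℝ) (ha : Function.Injective a)
    (l : Fin j → ℕ) (hl : ∀ s t : Fin j, s ≤ t → l t ≤ l s) :
    Matrix.det (Matrix.of fun s t : Fin j =>
        a ⟨i + 1 - j + s.val, by omega⟩ ^ (l t.rev + t.val) *
          iteratedDeriv (l t.rev + t.val) f 0) =
      (∏ t : Fin j, iteratedDeriv (l t + (j - 1 - t.val)) f 0) *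
        (∏ s : Fin j, ∏ t ∈ Finset.Ioi s,
          (a ⟨i + 1 - j + t.val, by omega⟩ - a ⟨i + 1 - j + s.val, by omega⟩)) *
        (Matrix.det (Matrix.of fun s t : Fin j =>
            a ⟨i + 1 - j + t.val, by omega⟩ ^ (l s.rev + s.val)) /
          (∏ s : Fin j, ∏ t ∈ Finset.Ioi s,
            (a ⟨i + 1 - j + t.val, by omega⟩ - a ⟨i + 1 - j + s.val, by omega⟩))) := by
  have hidx : ∀ s : Fin j, i + 1 - j + s.val < n := fun s => by omega
  set idx : Fin j → Fin n := fun s => ⟨i + 1 - j + s.val, hidx s⟩ with hidxdef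
  -- The Vandermonde determinant is nonzero
  have hV : (∏ s : Fin j, ∏ t ∈ Finset.Ioi s,
      (a (idx t) - a (idx s))) ≠ 0 := by
    rw [Finset.prod_ne_zero_iff]
    intro s _
    rw [Finset.prod_ne_zero_iff]
    intro t ht
    have hst : s < t := Finset.mem_Ioi.mp ht
    refine sub_ne_zero.mpr fun h => ?_
    have := ha h
    simp only [hidxdef, Fin.mk.injEq] at this
    omega
  have key : ∀ (P D : ℝ), P * (∏ s : Fin j, ∏ t ∈ Finset.Ioi s,
      (a (idx t) - a (idx s))) * (D / (∏ s : Fin j, ∏ t ∈ Finset.Ioi s,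
      (a (idx t) - a (idx s)))) = P * D := by
    intro P D
    field_simp
  rw [key]
  -- reindex the product of derivatives by Fin.rev
  have hprod : (∏ t : Fin j, iteratedDeriv (l t + (j - 1 - t.val)) f 0) =
      ∏ t : Fin j, iteratedDeriv (l t.rev + t.val) f 0 := by
    refine Fintype.prod_equiv (Fin.revPerm) _ _ fun x => ?_
    simp only [Fin.revPerm_apply, Fin.rev_rev, Fin.val_rev]
    congr 2 <;> omega
  rw [hprod]
  -- transpose the second determinant
  have hdet : (Matrix.det (Matrix.of fun s t : Fin j =>
      a (idx t) ^ (l s.rev + s.val))) =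
      Matrix.det (Matrix.of fun s t : Fin j => a (idx s) ^ (l t.rev + t.val)) := by
    rw [← Matrix.det_transpose]
    rfl
  rw [hdet]
  -- factor the column multipliers out of the determinant
  have hM : (Matrix.of fun s t : Fin j =>
      a (idx s) ^ (l t.rev + t.val) * iteratedDeriv (l t.rev + t.val) f 0) =
      Matrix.of fun s t : Fin j => (fun t : Fin j => iteratedDeriv (l t.rev + t.val) f 0) t *
        (Matrix.of fun s t : Fin j => a (idx s) ^ (l t.rev + t.val)) s t := by
    ext s t
    simp [mul_comm]
  rw [hM, Matrix.det_mul_row]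
end

section
/- Suppose f is analytic at 0 with f^{(k)}(0) ≥ 0 for all k ≥ 0, and let 0 < a₁ < ... < aₙ. Then for any 0 < x₁ < ... < xₙ in the domain of convergence, the determinant of the collocation matrix (f(a_j x_i))_{i,j=1}^n is nonnegative. -/
open Finset

/-- A combination of `n` distinct monomials vanishing at `n` distinct positive points
has all coefficients zero. -/
lemma coeffs_eq_zero_of_roots :
    ∀ (n : ℕ) (μ : Fin n → ℕ), StrictMono μ → ∀ (c : Fin n → ℝ) (r : Fin n → ℝ),
    StrictMono r → (∀ i, 0 < r i) →
    (∀ i, ∑ j, c j * r i ^ μ j = 0) → ∀ j, c j = 0 := by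
  intro n
  induction n with
  | zero => intro μ _ c r _ _ _ j; exact j.elim0
  | succ n ih =>
    intro μ hμ c r hr hr0 hz
    -- divide by x ^ μ 0
    set h : ℝ → ℝ := fun t => ∑ j, c j * t ^ (μ j - μ 0) with hh
    have hroot : ∀ i, h (r i) = 0 := by
      intro i
      have hpow : (r i) ^ (μ 0) ≠ 0 := pow_ne_zero _ (hr0 i).ne'
      have : h (r i) * r i ^ μ 0 = 0 := by
        rw [hh]
        simp only [Finset.sum_mul]
        rw [← hz i]
        refine Finset.sum_congr rfl fun j _ => ?_
        rw [mul_assoc, ← pow_add]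
        congr 2
        have : μ 0 ≤ μ j := hμ.monotone (Fin.zero_le j)
        omega
      exact (mul_eq_zero.1 this).resolve_right hpow
    -- derivative of h
    have hderiv : ∀ t : ℝ, HasDerivAt h
        (∑ j, c j * (((μ j - μ 0 : ℕ) : ℝ) * t ^ (μ j - μ 0 - 1))) t := by
      intro t
      refine HasDerivAt.fun_sum fun j _ => ?_
      simpa using (hasDerivAt_pow (μ j - μ 0) t).const_mul (c j)
    have hcont : Continuous h := by
      apply continuous_finset_sum
      intro j _
      exact continuous_const.mul (continuous_pow _)
    -- Rolle between consecutive roots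
    have hex : ∀ i : Fin n, ∃ s, s ∈ Set.Ioo (r (Fin.castSucc i)) (r (Fin.succ i)) ∧
        ∑ j, c j * (((μ j - μ 0 : ℕ) : ℝ) * s ^ (μ j - μ 0 - 1)) = 0 := by
      intro i
      have hlt : r (Fin.castSucc i) < r (Fin.succ i) := hr Fin.castSucc_lt_succ
      obtain ⟨s, hs, hds⟩ := exists_deriv_eq_zero hlt (hcont.continuousOn)
        (by rw [hroot, hroot])
      refine ⟨s, hs, ?_⟩
      rw [← hds, (hderiv s).deriv]
    choose s hs hds using hex
    have hs0 : ∀ i, 0 < s i := fun i => lt_trans (hr0 _) (hs i).1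
    have hsmono : StrictMono s := by
      intro i i' hii
      calc s i < r (Fin.succ i) := (hs i).2
        _ ≤ r (Fin.castSucc i') := by
            apply hr.monotone
            rw [Fin.succ_le_castSucc_iff]; exact hii
        _ < s i' := (hs i').1
    -- apply IH to the derivative
    have hμ' : StrictMono (fun j : Fin n => μ (Fin.succ j) - μ 0 - 1) := by
      intro j j' hjj
      simp only
      have h1 : μ (Fin.succ j) < μ (Fin.succ j') := hμ (Fin.succ_lt_succ_iff.2 hjj)
      have h2 : μ 0 < μ (Fin.succ j) := hμ (Fin.succ_pos j)
      omega
    have hctail : ∀ j : Fin n, c (Fin.succ j) * ((μ (Fin.succ j) - μ 0 : ℕ) : ℝ) = 0 := by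
      refine ih _ hμ' _ s hsmono hs0 ?_
      intro i
      have := hds i
      rw [Fin.sum_univ_succ] at this
      simpa [mul_assoc] using this
    have hctail' : ∀ j : Fin n, c (Fin.succ j) = 0 := by
      intro j
      have h2 : μ 0 < μ (Fin.succ j) := hμ (Fin.succ_pos j)
      have : ((μ (Fin.succ j) - μ 0 : ℕ) : ℝ) ≠ 0 := by
        exact_mod_cast Nat.sub_ne_zero_of_lt h2
      exact (mul_eq_zero.1 (hctail j)).resolve_right this
    -- head coefficient
    have h0 : c 0 = 0 := by
      have := hroot 0
      rw [hh] at this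
      simp only at this
      rw [Fin.sum_univ_succ] at this
      simpa [hctail'] using this
    intro j
    rcases Fin.eq_zero_or_eq_succ j with rfl | ⟨j', rfl⟩
    · exact h0
    · exact hctail' j'

open Matrix in
lemma genVdm_det_ne_zero {n : ℕ} {μ : Fin n → ℕ} (hμ : StrictMono μ)
    {x : Fin n → ℝ} (hx : StrictMono x) (hx0 : ∀ i, 0 < x i) :
    (Matrix.of fun i j : Fin n => x i ^ μ j).det ≠ 0 := by
  classical
  intro hdet
  obtain ⟨v, hv, hmv⟩ := (Matrix.exists_mulVec_eq_zero_iff).2 hdet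
  apply hv
  funext j
  refine coeffs_eq_zero_of_roots n μ hμ v x hx hx0 ?_ j
  intro i
  have := congrFun hmv i
  simpa [Matrix.mulVec, dotProduct, mul_comm] using this

open Matrix Finset Filter in
lemma genVdm_det_pos :
    ∀ (n : ℕ) (μ : Fin n → ℕ), StrictMono μ → ∀ (x : Fin n → ℝ),
    StrictMono x → (∀ i, 0 < x i) →
    0 < (Matrix.of fun i j : Fin n => x i ^ μ j).det := by
  intro n
  induction n with
  | zero => intro μ _ x _ _; simp [Matrix.det_isEmpty]
  | succ n ih =>
    intro μ hμ x hx hx0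
    classical
    set g : ℝ → ℝ := fun t =>
      (Matrix.of fun i j : Fin (n+1) => (Function.update x (Fin.last n) t) i ^ μ j).det with hg
    set d : Fin (n+1) → ℝ := fun j => (-1 : ℝ) ^ (n + (j : ℕ)) *
      (Matrix.of fun i' j' : Fin n =>
        x (Fin.castSucc i') ^ μ (j.succAbove j')).det with hd
    -- polynomial form
    have hpoly : ∀ t : ℝ, g t = ∑ j, d j * t ^ μ j := by
      intro t
      rw [hg]
      simp only
      rw [Matrix.det_succ_row _ (Fin.last n)]
      refine Finset.sum_congr rfl fun j _ => ?_
      have h1 : (Matrix.of fun i j : Fin (n+1) => (Function.update x (Fin.last n) t) i ^ μ j)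
          (Fin.last n) j = t ^ μ j := by
        simp [Function.update_self]
      have h2 : ((Matrix.of fun i j : Fin (n+1) =>
            (Function.update x (Fin.last n) t) i ^ μ j).submatrix
            (Fin.last n).succAbove j.succAbove) =
          (Matrix.of fun i' j' : Fin n => x (Fin.castSucc i') ^ μ (j.succAbove j')) := by
        ext i' j'
        simp [Fin.succAbove_last, Function.update_of_ne (Fin.castSucc_lt_last i').ne]
      rw [h1, h2, hd]
      simp only [Fin.val_last]
      ring
    have hglast : g (x (Fin.last n)) =
        (Matrix.of fun i j : Fin (n+1) => x i ^ μ j).det := by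
      rw [hg]; simp [Function.update_eq_self]
    -- leading cofactor is positive
    have hdlast : 0 < d (Fin.last n) := by
      rw [hd]
      simp only [Fin.val_last]
      have h1 : (-1 : ℝ) ^ (n + n) = 1 := Even.neg_one_pow (Even.add_self n)
      rw [h1, one_mul]
      have := ih (fun j' => μ ((Fin.last n).succAbove j'))
        (fun j1 j2 h12 => hμ (by simpa [Fin.succAbove_last] using
          (Fin.castSucc_lt_castSucc_iff.2 h12)))
        (fun i' => x (Fin.castSucc i'))
        (fun i1 i2 h12 => hx (Fin.castSucc_lt_castSucc_iff.2 h12))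
        (fun i' => hx0 _)
      simpa using this
    -- nonvanishing of g at admissible points
    have hne : ∀ t : ℝ, 0 < t → (∀ i : Fin n, x (Fin.castSucc i) < t) → g t ≠ 0 := by
      intro t ht hti
      rw [hg]
      simp only
      have hymono : StrictMono (Function.update x (Fin.last n) t) := by
        intro i1 i2 h12
        rcases eq_or_ne i2 (Fin.last n) with rfl | h2
        · have h1 : i1 ≠ Fin.last n := h12.ne
          rw [Function.update_self, Function.update_of_ne h1]
          have := hti (i1.castPred h1)
          rwa [Fin.castSucc_castPred] at this
        · have h1 : i1 ≠ Fin.last n := by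
            intro hh; subst hh
            exact absurd (h12.trans_le (Fin.le_last i2)) (lt_irrefl _)
          rw [Function.update_of_ne h1, Function.update_of_ne h2]
          exact hx h12
      have hypos : ∀ i, 0 < Function.update x (Fin.last n) t i := by
        intro i
        rcases eq_or_ne i (Fin.last n) with rfl | h1
        · rwa [Function.update_self]
        · rw [Function.update_of_ne h1]; exact hx0 i
      exact genVdm_det_ne_zero hμ hymono hypos
    -- g is continuous
    have hcont : Continuous g := by
      have : g = fun t => ∑ j, d j * t ^ μ j := funext hpoly
      rw [this]
      exact continuous_finset_sum _ fun j _ => continuous_const.mul (continuous_pow _)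
    -- asymptotics
    have htend : Tendsto (fun t => g t / t ^ μ (Fin.last n)) atTop
        (nhds (d (Fin.last n))) := by
      have h1 : Tendsto (fun t => ∑ j, d j * t ^ μ j / t ^ μ (Fin.last n)) atTop
          (nhds (∑ j, if j = Fin.last n then d (Fin.last n) else 0)) := by
        apply tendsto_finset_sum
        intro j _
        by_cases hj : j = Fin.last n
        · subst hj
          rw [if_pos rfl]
          apply Tendsto.congr' _ tendsto_const_nhds
          filter_upwards [eventually_gt_atTop (0:ℝ)] with t ht
          rw [mul_div_assoc, div_self (pow_ne_zero _ ht.ne'), mul_one]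
        · rw [if_neg hj]
          have hlt : μ j < μ (Fin.last n) := hμ ((Fin.le_last j).lt_of_ne hj)
          have := (tendsto_pow_div_pow_atTop_zero hlt).const_mul (d j)
          simpa [mul_div_assoc] using this
      have h2 : (∑ j, if j = Fin.last n then d (Fin.last n) else 0) = d (Fin.last n) := by
        simp
      rw [h2] at h1
      apply h1.congr
      intro t
      rw [hpoly, Finset.sum_div]
    -- pick a large T where g is positive
    obtain ⟨T, hT⟩ := ((htend.eventually (lt_mem_nhds hdlast)).and
      ((eventually_gt_atTop (x (Fin.last n))).and (eventually_gt_atTop (0:ℝ)))).exists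
    obtain ⟨hgT, hTx, hT0⟩ := hT
    have hgTpos : 0 < g T := by
      have := mul_pos hgT (pow_pos hT0 (μ (Fin.last n)))
      rwa [div_mul_cancel₀ _ (pow_ne_zero _ hT0.ne')] at this
    -- sign argument
    have hgx_ne : g (x (Fin.last n)) ≠ 0 :=
      hne _ (hx0 _) (fun i => hx (Fin.castSucc_lt_last i))
    rcases lt_or_gt_of_ne hgx_ne with hneg | hpos
    · exfalso
      have hsub : Set.Icc (g (x (Fin.last n))) (g T) ⊆ g '' Set.Icc (x (Fin.last n)) T :=
        intermediate_value_Icc hTx.le hcont.continuousOn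
      obtain ⟨c, hc, hgc⟩ := hsub ⟨hneg.le, hgTpos.le⟩
      refine hne c ((hx0 _).trans_le hc.1) (fun i => ?_) hgc
      exact (hx (Fin.castSucc_lt_last i)).trans_le hc.1
    · rwa [hglast] at hpos

open Matrix Finset Equiv in
lemma det_partial_sum_nonneg {n : ℕ} (N : ℕ) (c : ℕ → ℝ) (hc : ∀ k, 0 ≤ c k)
    (a x : Fin n → ℝ) (ha0 : ∀ i, 0 < a i) (ha : StrictMono a)
    (hx0 : ∀ i, 0 < x i) (hx : StrictMono x) :
    0 ≤ (Matrix.of fun i j : Fin n => ∑ k ∈ Finset.range N, c k * (a j * x i) ^ k).det := by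
  classical
  set Q : (Fin n → ℕ) → ℝ := fun r =>
    (∏ j, c (r j) * a j ^ r j) * (Matrix.of fun i j : Fin n => x i ^ r j).det with hQ
  have key : (Matrix.of fun i j : Fin n => ∑ k ∈ Finset.range N, c k * (a j * x i) ^ k).det
      = ∑ r ∈ Fintype.piFinset (fun _ : Fin n => Finset.range N), Q r := by
    rw [Matrix.det_apply']
    have hentry : ∀ (σ : Equiv.Perm (Fin n)),
        ∏ j, (Matrix.of fun i j : Fin n => ∑ k ∈ Finset.range N, c k * (a j * x i) ^ k) (σ j) j
        = ∑ r ∈ Fintype.piFinset (fun _ : Fin n => Finset.range N),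
            ∏ j, (c (r j) * a j ^ r j) * x (σ j) ^ r j := by
      intro σ
      have h1 : ∀ j : Fin n,
          (Matrix.of fun i j : Fin n => ∑ k ∈ Finset.range N, c k * (a j * x i) ^ k) (σ j) j
          = ∑ k ∈ Finset.range N, (c k * a j ^ k) * x (σ j) ^ k := by
        intro j
        simp only [Matrix.of_apply]
        refine Finset.sum_congr rfl fun k _ => ?_
        rw [mul_pow]; ring
      rw [Finset.prod_congr rfl fun j _ => h1 j, Finset.prod_univ_sum]
    calc ∑ σ : Equiv.Perm (Fin n), ((Equiv.Perm.sign σ : ℤ) : ℝ) *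
          ∏ j, (Matrix.of fun i j : Fin n => ∑ k ∈ Finset.range N, c k * (a j * x i) ^ k) (σ j) j
        = ∑ σ : Equiv.Perm (Fin n), ∑ r ∈ Fintype.piFinset (fun _ : Fin n => Finset.range N),
            ((Equiv.Perm.sign σ : ℤ) : ℝ) * ∏ j, (c (r j) * a j ^ r j) * x (σ j) ^ r j := by
          refine Finset.sum_congr rfl fun σ _ => ?_
          rw [hentry, Finset.mul_sum]
      _ = ∑ r ∈ Fintype.piFinset (fun _ : Fin n => Finset.range N),
            ∑ σ : Equiv.Perm (Fin n),
            ((Equiv.Perm.sign σ : ℤ) : ℝ) * ∏ j, (c (r j) * a j ^ r j) * x (σ j) ^ r j := by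
          rw [Finset.sum_comm]
      _ = ∑ r ∈ Fintype.piFinset (fun _ : Fin n => Finset.range N), Q r := by
          refine Finset.sum_congr rfl fun r _ => ?_
          rw [hQ]
          simp only
          rw [Matrix.det_apply', Finset.mul_sum]
          refine Finset.sum_congr rfl fun σ _ => ?_
          rw [Finset.prod_mul_distrib]
          simp only [Matrix.of_apply]
          ring
  rw [key]
  rw [← Finset.sum_filter_add_sum_filter_not
    (Fintype.piFinset (fun _ : Fin n => Finset.range N)) (fun r => Function.Injective r) Q]
  have hnoninj : ∑ r ∈ (Fintype.piFinset (fun _ : Fin n => Finset.range N)).filter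
      (fun r => ¬ Function.Injective r), Q r = 0 := by
    refine Finset.sum_eq_zero fun r hr => ?_
    rw [Finset.mem_filter] at hr
    obtain ⟨j1, j2, heq, hne⟩ : ∃ j1 j2, r j1 = r j2 ∧ j1 ≠ j2 := by
      by_contra hcon
      push_neg at hcon
      exact hr.2 fun j1 j2 h => hcon j1 j2 h
    have : (Matrix.of fun i j : Fin n => x i ^ r j).det = 0 :=
      Matrix.det_zero_of_column_eq hne (fun i => by simp [heq])
    rw [hQ]
    simp only
    rw [this, mul_zero]
  rw [hnoninj, add_zero]
  -- regroup the injective sum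
  set S : Finset (Fin n → ℕ) := (Fintype.piFinset (fun _ : Fin n => Finset.range N)).filter
    (fun s => StrictMono s) with hS
  have hgroup : ∑ r ∈ (Fintype.piFinset (fun _ : Fin n => Finset.range N)).filter
      (fun r => Function.Injective r), Q r
      = ∑ p ∈ S ×ˢ (Finset.univ : Finset (Equiv.Perm (Fin n))), Q (p.1 ∘ p.2) := by
    refine Finset.sum_nbij' (fun r => (r ∘ Tuple.sort r, (Tuple.sort r)⁻¹))
      (fun p => p.1 ∘ p.2) ?_ ?_ ?_ ?_ ?_
    · intro r hr
      rw [Finset.mem_filter, Fintype.mem_piFinset] at hr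
      rw [Finset.mem_product, hS, Finset.mem_filter, Fintype.mem_piFinset]
      refine ⟨⟨fun j => hr.1 _, ?_⟩, Finset.mem_univ _⟩
      exact (Tuple.monotone_sort r).strictMono_of_injective
        (hr.2.comp (Equiv.injective _))
    · intro p hp
      rw [Finset.mem_product, hS, Finset.mem_filter, Fintype.mem_piFinset] at hp
      rw [Finset.mem_filter, Fintype.mem_piFinset]
      exact ⟨fun j => hp.1.1 _, hp.1.2.injective.comp (Equiv.injective _)⟩
    · intro r hr
      funext j
      simp
    · intro p hp
      rw [Finset.mem_product, hS, Finset.mem_filter] at hp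
      obtain ⟨⟨_, hmono⟩, _⟩ := hp
      have hsort : Tuple.sort (p.1 ∘ p.2) = p.2⁻¹ := by
        symm
        rw [Tuple.eq_sort_iff]
        constructor
        · have : (p.1 ∘ p.2) ∘ (p.2⁻¹ : Equiv.Perm (Fin n)) = p.1 := by
            funext j; simp
          rw [this]
          exact hmono.monotone
        · intro i j hij hval
          exfalso
          have : (p.2 : Fin n → Fin n) ((p.2⁻¹ : Equiv.Perm (Fin n)) i)
              = p.2 ((p.2⁻¹ : Equiv.Perm (Fin n)) j) := by
            apply hmono.injective
            exact hval
          simp only [Equiv.Perm.inv_def, Equiv.apply_symm_apply] at this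
          exact hij.ne this
      rw [hsort]
      ext j
      · simp
      · simp
    · intro r hr
      have : (r ∘ Tuple.sort r) ∘ ((Tuple.sort r)⁻¹ : Equiv.Perm (Fin n)) = r := by
        funext j; simp
      rw [this]
  rw [hgroup, Finset.sum_product]
  refine Finset.sum_nonneg fun s hs => ?_
  rw [hS, Finset.mem_filter] at hs
  obtain ⟨hsN, hsmono⟩ := hs
  -- inner sum over permutations equals a product of two positive determinants
  have hinner : ∑ σ : Equiv.Perm (Fin n), Q (s ∘ σ)
      = (∏ j, c (s j)) * ((Matrix.of fun k j : Fin n => a j ^ s k).det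
          * (Matrix.of fun i j : Fin n => x i ^ s j).det) := by
    have hQs : ∀ σ : Equiv.Perm (Fin n), Q (s ∘ σ)
        = (∏ j, c (s j)) * ((((Equiv.Perm.sign σ : ℤ) : ℝ) * ∏ j, a j ^ s (σ j))
            * (Matrix.of fun i j : Fin n => x i ^ s j).det) := by
      intro σ
      rw [hQ]
      simp only [Function.comp_apply]
      have hdetperm : (Matrix.of fun i j : Fin n => x i ^ s (σ j)).det
          = ((Equiv.Perm.sign σ : ℤ) : ℝ) * (Matrix.of fun i j : Fin n => x i ^ s j).det := by
        have := Matrix.det_permute' σ (Matrix.of fun i j : Fin n => x i ^ s j)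
        simpa [Matrix.submatrix] using this
      rw [hdetperm, Finset.prod_mul_distrib]
      have hcprod : ∏ j, c (s (σ j)) = ∏ j, c (s j) := Equiv.prod_comp σ (fun j => c (s j))
      rw [hcprod]
      ring
    rw [Finset.sum_congr rfl (fun σ _ => hQs σ), ← Finset.mul_sum]
    congr 1
    have hda : (Matrix.of fun k j : Fin n => a j ^ s k).det
        = ∑ σ : Equiv.Perm (Fin n), ((Equiv.Perm.sign σ : ℤ) : ℝ) * ∏ j, a j ^ s (σ j) := by
      rw [Matrix.det_apply']
      exact Finset.sum_congr rfl fun σ _ => by simp [Matrix.of_apply]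
    rw [hda, Finset.sum_mul]
  rw [hinner]
  have hdet_a : 0 < (Matrix.of fun k j : Fin n => a j ^ s k).det := by
    have heq : (Matrix.of fun k j : Fin n => a j ^ s k)
        = (Matrix.of fun i j : Fin n => a i ^ s j)ᵀ := by
      ext i j
      simp [Matrix.transpose_apply]
    rw [heq, Matrix.det_transpose]
    exact genVdm_det_pos n s hsmono a ha ha0
  have hdet_x : 0 < (Matrix.of fun i j : Fin n => x i ^ s j).det :=
    genVdm_det_pos n s hsmono x hx hx0
  have hcpos : 0 ≤ ∏ j, c (s j) := Finset.prod_nonneg fun j _ => hc _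
  positivity

open Matrix Filter in
/-- If `f` is given on `(-R, R)` by its Maclaurin series and all derivatives
`f^{(k)}(0)` are nonnegative, then for increasing positive parameters
`0 < a₁ < ⋯ < aₙ` and nodes `0 < x₁ < ⋯ < xₙ` with all `aⱼxᵢ` in the domain
of convergence, the determinant of the collocation matrix `(f(aⱼxᵢ))` is
nonnegative. -/
theorem collocation_det_nonneg_of_nonneg_derivs
    (f : ℝ → ℝ) (R : ℝ) (hR : 0 < R)
    (hf : ∀ y : ℝ, |y| < R →
      HasSum (fun k : ℕ => iteratedDeriv k f 0 / (Nat.factorial k : ℝ) * y ^ k) (f y))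
    (hderiv : ∀ k : ℕ, 0 ≤ iteratedDeriv k f 0)
    (n : ℕ) (a x : Fin n → ℝ)
    (ha0 : ∀ i, 0 < a i) (ha : StrictMono a)
    (hx0 : ∀ i, 0 < x i) (hx : StrictMono x)
    (hdom : ∀ i j, a j * x i < R) :
    0 ≤ Matrix.det (Matrix.of fun i j : Fin n => f (a j * x i)) := by
  classical
  set c : ℕ → ℝ := fun k => iteratedDeriv k f 0 / (Nat.factorial k : ℝ) with hcdef
  have hc : ∀ k, 0 ≤ c k := fun k => div_nonneg (hderiv k) (Nat.cast_nonneg _)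
  have htendentry : ∀ i j : Fin n,
      Tendsto (fun N => ∑ k ∈ Finset.range N, c k * (a j * x i) ^ k)
        atTop (nhds (f (a j * x i))) := by
    intro i j
    have habs : |a j * x i| < R := by
      rw [abs_of_pos (mul_pos (ha0 j) (hx0 i))]
      exact hdom i j
    exact (hf _ habs).tendsto_sum_nat
  have htend : Tendsto (fun N => (Matrix.of fun i j : Fin n =>
      ∑ k ∈ Finset.range N, c k * (a j * x i) ^ k).det) atTop
      (nhds ((Matrix.of fun i j : Fin n => f (a j * x i)).det)) := by
    simp only [Matrix.det_apply']
    apply tendsto_finset_sum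
    intro σ _
    apply Filter.Tendsto.const_mul
    apply tendsto_finset_prod
    intro i _
    simpa using htendentry (σ i) i
  exact ge_of_tendsto' htend (fun N => det_partial_sum_nonneg N c hc a x ha0 ha hx0 hx)
end
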